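/- Quantizations of isometries are isometric: let K be a coherent product on a nonempty set Z, let (H, f) be a quantum space realization of (Z, K), and let A : Z → Z be coherent with adjoint B : Z → Z satisfying B (A z) = z for all z ∈ Z. Then the quantization Γ(A) is isometric on the span S of the coherent states: ‖Γ(A) u‖ = ‖u‖ for all u ∈ S, and more precisely ⟪Γ(A) u, Γ(A) v⟫ = ⟪u, v⟫ for all u, v ∈ S. Consequently Γ(A) extends to a linear isometry of H into itself. -/

import Mathlib

open scoped ComplexConjugate

noncomputable section

/-- A coherent product on `Z`: Hermitian and all finite Gram matrices positive semidefinite. -/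
def IsCoherentProduct {Z : Type*} (K : Z → Z → ℂ) : Prop :=
  (∀ z z' : Z, conj (K z z') = K z' z) ∧
  ∀ (n : ℕ) (z : Fin n → Z) (c : Fin n → ℂ),
    ∃ r : ℝ, 0 ≤ r ∧ (∑ j, ∑ k, conj (c j) * K (z j) (z k) * c k) = (r : ℂ)

/-- The distance associated to a coherent product. -/
def cohDist {Z : Type*} (K : Z → Z → ℂ) (z z' : Z) : ℝ :=
  Real.sqrt ((K z z).re + (K z' z').re - 2 * (K z z').re)

/-- A quantum space realization of `(Z, K)`: a complex Hilbert space `H` and a map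
`f : Z → H` whose inner products realize `K` and whose range has dense span. -/
def IsQuantumSpace {Z : Type*} (K : Z → Z → ℂ) (H : Type*) [NormedAddCommGroup H]
    [InnerProductSpace ℂ H] [CompleteSpace H] (f : Z → H) : Prop :=
  (∀ z z' : Z, (inner ℂ (f z) (f z') : ℂ) = K z z') ∧
  Dense (Submodule.span ℂ (Set.range f) : Set H)

/-- The span of the coherent states. -/
def cohSpan {Z H : Type*} [NormedAddCommGroup H] [InnerProductSpace ℂ H]
    (f : Z → H) : Submodule ℂ H :=
  Submodule.span ℂ (Set.range f)

/-- The coherent state `f z`, seen as an element of the span of the coherent states. -/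
def cohState {Z H : Type*} [NormedAddCommGroup H] [InnerProductSpace ℂ H]
    (f : Z → H) (z : Z) : cohSpan f :=
  ⟨f z, Submodule.subset_span (Set.mem_range_self z)⟩

/-! On coherent states, `Γ(A)` preserves inner products because `K (A z) (A z') = K (B (A z)) z'
= K z z'`. Inner products are sesquilinear, so this spreads to the whole span of the coherent
states, and a norm-preserving linear map on a dense subspace of a Hilbert space extends by
continuity to a linear isometry. -/

open scoped InnerProductSpace

theorem LinearMap.inner_map_map_of_span_eq_top {𝕜 E E' : Type*} [RCLike 𝕜]
    [SeminormedAddCommGroup E] [InnerProductSpace 𝕜 E]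
    [SeminormedAddCommGroup E'] [InnerProductSpace 𝕜 E']
    (T : E →ₗ[𝕜] E') {s : Set E} (hs : Submodule.span 𝕜 s = ⊤)
    (h : ∀ x ∈ s, ∀ y ∈ s, ⟪T x, T y⟫_𝕜 = ⟪x, y⟫_𝕜) (x y : E) :
    ⟪T x, T y⟫_𝕜 = ⟪x, y⟫_𝕜 := by
  have key : ((innerₛₗ 𝕜).comp T).compl₂ T = innerₛₗ 𝕜 :=
    LinearMap.ext_on hs fun x hx => LinearMap.ext_on hs fun y hy => h x hx y hy
  exact LinearMap.congr_fun₂ key x y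

theorem Submodule.exists_linearIsometry_extend_of_dense {𝕜 E F : Type*}
    [NontriviallyNormedField 𝕜] [NormedAddCommGroup E] [NormedSpace 𝕜 E]
    [NormedAddCommGroup F] [NormedSpace 𝕜 F] [CompleteSpace F]
    {S : Submodule 𝕜 E} (hS : Dense (S : Set E)) (T : S →ₗ[𝕜] F)
    (hT : ∀ u, ‖T u‖ = ‖(u : E)‖) : ∃ J : E →ₗᵢ[𝕜] F, ∀ u : S, J u = T u := by
  have h_dense : DenseRange S.subtype := by simpa [DenseRange] using hS
  have h_bound : ∃ C, ∀ u, ‖T u‖ ≤ C * ‖S.subtype u‖ := ⟨1, fun u => by simp [hT]⟩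
  have h_eq : ∀ u : S, T.extendOfNorm S.subtype u = T u :=
    LinearMap.extendOfNorm_eq h_dense h_bound
  refine ⟨⟨(T.extendOfNorm S.subtype).toLinearMap, fun x => ?_⟩, h_eq⟩
  refine h_dense.induction (fun x ⟨u, hu⟩ => ?_) (isClosed_eq (by fun_prop) continuous_norm) x
  simp [← hu, h_eq, hT]

theorem coherentProduct_map_map {Z : Type*} {K : Z → Z → ℂ} {A B : Z → Z}
    (hAB : ∀ z z' : Z, K z (A z') = K (B z) z') (hBA : Function.LeftInverse B A) (z z' : Z) :
    K (A z) (A z') = K z z' := by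
  rw [hAB, hBA]

theorem span_range_cohState {Z H : Type*} [NormedAddCommGroup H] [InnerProductSpace ℂ H]
    (f : Z → H) : Submodule.span ℂ (Set.range (cohState f)) = ⊤ := by
  have h_range : Set.range (cohState f) = ((↑) : cohSpan f → H) ⁻¹' Set.range f := by
    ext ⟨x, hx⟩
    simp [cohState, Subtype.ext_iff]
  rw [h_range]
  exact Submodule.span_span_coe_preimage

theorem stmt_10_general {Z : Type*} (K : Z → Z → ℂ)
    {H : Type*} [NormedAddCommGroup H] [InnerProductSpace ℂ H] [CompleteSpace H]
    (f : Z → H) (hq : IsQuantumSpace K H f)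
    (A B : Z → Z)
    (hAB : ∀ z z' : Z, K z (A z') = K (B z) z')
    (hBA : ∀ z : Z, B (A z) = z)
    (T : cohSpan f →ₗ[ℂ] H)
    (hT : ∀ z : Z, T (cohState f z) = f (A z)) :
    (∀ u v : cohSpan f, (inner ℂ (T u) (T v) : ℂ) = inner ℂ (u : H) (v : H)) ∧
    (∀ u : cohSpan f, ‖T u‖ = ‖(u : H)‖) ∧
    (∃ J : H →ₗᵢ[ℂ] H, ∀ u : cohSpan f, J (u : H) = T u) := by
  obtain ⟨hf_inner, hdense⟩ := hq
  have hinner : ∀ u v : cohSpan f, ⟪T u, T v⟫_ℂ = ⟪(u : H), (v : H)⟫_ℂ :=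
    T.inner_map_map_of_span_eq_top (span_range_cohState f) <| by
      rintro _ ⟨z, rfl⟩ _ ⟨z', rfl⟩
      rw [hT, hT, Submodule.coe_inner]
      simp only [cohState, hf_inner, coherentProduct_map_map hAB hBA]
  have hnorm := (LinearMap.norm_map_iff_inner_map_map T).2 hinner
  exact ⟨hinner, hnorm, Submodule.exists_linearIsometry_extend_of_dense hdense T hnorm⟩

/-- quantizations of isometries are isometric on the span of the coherent
states, and extend to a linear isometry of `H` into itself. -/
theorem stmt_10 {Z : Type*} [Nonempty Z] (K : Z → Z → ℂ) (hK : IsCoherentProduct K)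
    {H : Type*} [NormedAddCommGroup H] [InnerProductSpace ℂ H] [CompleteSpace H]
    (f : Z → H) (hq : IsQuantumSpace K H f)
    (A B : Z → Z)
    (hAB : ∀ z z' : Z, K z (A z') = K (B z) z')
    (hBA : ∀ z : Z, B (A z) = z)
    (T : cohSpan f →ₗ[ℂ] H)
    (hT : ∀ z : Z, T (cohState f z) = f (A z)) :
    (∀ u v : cohSpan f, (inner ℂ (T u) (T v) : ℂ) = inner ℂ (u : H) (v : H)) ∧
    (∀ u : cohSpan f, ‖T u‖ = ‖(u : H)‖) ∧
    (∃ J : H →ₗᵢ[ℂ] H, ∀ u : cohSpan f, J (u : H) = T u) :=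
  stmt_10_general K f hq A B hAB hBA T hT
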